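/- arXiv:2511.13926 — 3 statements merged into one kernel-verified Lean document; each statement's English description precedes it below -/
import Mathlib

section
/- Let Z be a chordal graph on N vertices with maximal cliques C₁, ..., C_M. A symmetric negative semidefinite matrix Z (block-wise structured so that block (i,j) is zero whenever (i,j) is not an edge of the graph and i ≠ j) can be written as Z = Σ_{p=1}^M E_{C_p}ᵀ Z_p E_{C_p} where each Z_p is negative semidefinite, and conversely any such sum is a negative semidefinite matrix with the given sparsity structure. -/
/-!
Every nonempty vertex set `S` of a chordal graph contains a simplicial vertex `v`: its neighbours
in `S` form a clique. For a positive semidefinite `B` supported on `S`, subtracting the rank-one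
term `(B v v)⁻¹ • b bᴴ` (`b` the column of `v`) leaves the Schur complement, which is again positive
semidefinite, supported on `S \ {v}` and has the same sparsity pattern, while the subtracted term
lives on the clique formed by `v` and its neighbours in `S`, hence inside one maximal clique.
Induction on `S` gives the decomposition; the converse holds because a clique carries only edges.

The simplicial vertex can even be taken outside any clique `K ⊉ S`. Pick non-adjacent `a, b ∈ S`
with `K ∩ S` inside the closed neighbourhood of `a`, let `D` be the component of `b` in `S` minus
that neighbourhood and `T` the neighbours of `a` adjacent to `D`. Two non-adjacent vertices of `T`
would close, through `a` and a chordless path across `D`, a chordless cycle of length at least 4;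
so `T` is a clique, and induction on `D ∪ T` yields a vertex of `D` that is simplicial in `S`.
-/

open Matrix

/-- A chord of a cycle: an edge of the graph between two vertices of the cycle
that is not an edge of the cycle itself. -/
def HasChord {V : Type*} (G : SimpleGraph V) {v : V} (c : G.Walk v v) : Prop :=
  ∃ x y : V, x ∈ c.support ∧ y ∈ c.support ∧ G.Adj x y ∧ s(x, y) ∉ c.edges

/-- A graph is chordal if every cycle of length greater than three has a chord. -/
def IsChordal {V : Type*} (G : SimpleGraph V) : Prop :=
  ∀ (v : V) (c : G.Walk v v), c.IsCycle → 4 ≤ c.length → HasChord G c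

open SimpleGraph
open scoped ComplexOrder

namespace SimpleGraph.Walk

variable {V : Type*} {G : SimpleGraph V} {u v : V}

lemma exists_length_lt_of_adj_getVert (p : G.Walk u v) {i j : ℕ} (hij : i + 1 < j)
    (hj : j ≤ p.length) (h : G.Adj (p.getVert i) (p.getVert j)) :
    ∃ q : G.Walk u v, q.length < p.length ∧ q.support ⊆ p.support := by
  refine ⟨(p.take i).append (cons h (p.drop j)), ?_, fun x hx => ?_⟩
  · simp only [length_append, length_cons, take_length, drop_length]
    omega
  · rcases (mem_support_append_iff _ _).1 hx with hx | hx
    · exact (p.isSubwalk_take i).support_subset hx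
    · rw [support_cons, List.mem_cons] at hx
      rcases hx with rfl | hx
      · exact p.getVert_mem_support i
      · exact (p.isSubwalk_drop j).support_subset hx

lemma isChordless_of_forall_length_le (p : G.Walk u v)
    (hp : ∀ q : G.Walk u v, q.support ⊆ p.support → p.length ≤ q.length) : p.IsChordless := by
  have key : ∀ i j, i < j → j ≤ p.length → G.Adj (p.getVert i) (p.getVert j) →
      s(p.getVert i, p.getVert j) ∈ p.edges := by
    intro i j hij hj h
    rcases Nat.lt_or_ge (i + 1) j with hlt | hle
    · obtain ⟨q, hq, hqp⟩ := p.exists_length_lt_of_adj_getVert hlt hj h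
      exact absurd (hp q hqp) (not_le.2 hq)
    · obtain rfl : j = i + 1 := by omega
      exact (p.mk_mem_edges_iff_exists).2 ⟨i, by omega, rfl⟩
  refine isChordless_iff_forall_mem_edges.2 fun x y hx hy hxy => ?_
  obtain ⟨i, rfl, hi⟩ := mem_support_iff_exists_getVert.1 hx
  obtain ⟨j, rfl, hj⟩ := mem_support_iff_exists_getVert.1 hy
  rcases lt_trichotomy i j with h | rfl | h
  · exact key i j h hj hxy
  · exact absurd hxy (G.loopless.irrefl _)
  · rw [Sym2.eq_swap]
    exact key j i h hi hxy.symm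

lemma exists_isPath_isChordless {P : Set V} (p : G.Walk u v) (hp : ∀ x ∈ p.support, x ∈ P) :
    ∃ q : G.Walk u v, q.IsPath ∧ q.IsChordless ∧ ∀ x ∈ q.support, x ∈ P := by
  classical
  obtain ⟨q, hqP, hmin⟩ := WellFounded.has_min (measure fun q : G.Walk u v => q.length).wf
    {q | ∀ x ∈ q.support, x ∈ P} ⟨p, hp⟩
  have hsub : q.bypass.support ⊆ q.support := q.support_bypass_subset_support
  refine ⟨q.bypass, q.bypass_isPath, isChordless_of_forall_length_le _ fun r hr => ?_,
    fun x hx => hqP x (hsub hx)⟩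
  exact q.length_bypass_le_length.trans (not_lt.1 (hmin r fun x hx => hqP x (hsub (hr hx))))

end SimpleGraph.Walk

section Chordal

variable {V : Type*} {G : SimpleGraph V}

theorem IsChordal.adj_of_walk_avoiding_closedNbhd (hG : IsChordal G) {a t₁ t₂ : V}
    (h₁ : G.Adj a t₁) (h₂ : G.Adj a t₂) (hne : t₁ ≠ t₂) (p : G.Walk t₁ t₂)
    (hp : ∀ x ∈ p.support, x = t₁ ∨ x = t₂ ∨ (x ≠ a ∧ ¬ G.Adj a x)) : G.Adj t₁ t₂ := by
  by_contra hn
  obtain ⟨q, hq, hqc, hqP⟩ := p.exists_isPath_isChordless hp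
  have ha : a ∉ q.support := fun h => by
    rcases hqP a h with rfl | rfl | h
    exacts [h₁.ne rfl, h₂.ne rfl, h.1 rfl]
  have hlen : 2 ≤ q.length := by
    by_contra! h
    interval_cases hl : q.length
    · exact hne (Walk.eq_of_length_eq_zero hl)
    · exact hn (Walk.adj_of_length_eq_one hl)
  set c := Walk.cons h₁ (q.concat h₂.symm)
  have hc : c.IsCycle := by
    refine (Walk.cons_isCycle_iff _ _).2 ⟨hq.concat ha _, fun he => ?_⟩
    rw [Walk.edges_concat, List.concat_eq_append, List.mem_append, List.mem_singleton] at he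
    rcases he with he | he
    · exact ha (q.fst_mem_support_of_mem_edges he)
    · rcases Sym2.eq_iff.1 he with ⟨h, -⟩ | ⟨-, h⟩
      exacts [h₂.ne h, hne h]
  obtain ⟨x, y, hx, hy, hxy, hxyc⟩ := hG a c hc (by simp [c]; omega)
  simp only [c, Walk.support_cons, Walk.support_concat, List.mem_cons, List.mem_append,
    List.not_mem_nil, or_false, Walk.edges_cons, Walk.edges_concat, List.concat_eq_append, Sym2.eq,
    Sym2.rel_iff', Prod.mk.injEq, Prod.swap_prod_mk, not_or, not_and] at hx hy hxyc
  have hnbr : ∀ y ∈ q.support, G.Adj a y → y = t₁ ∨ y = t₂ := fun y hy hay => by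
    rcases hqP y hy with h | h | h
    exacts [.inl h, .inr h, absurd hay h.2]
  rcases hx with rfl | hx | rfl <;> rcases hy with rfl | hy | rfl
  all_goals first
    | exact G.loopless.irrefl _ hxy
    | exact hxyc.2.1 (hqc.mem_edges hx hy hxy)
    | rcases hnbr _ hy hxy with rfl | rfl <;> tauto
    | rcases hnbr _ hx hxy.symm with rfl | rfl <;> tauto

theorem IsChordal.isClique_common_neighbors (hG : IsChordal G) {a : V} {D : Set V}
    (hD : ∀ d₁ ∈ D, ∀ d₂ ∈ D, ∃ p : G.Walk d₁ d₂, ∀ x ∈ p.support, x ≠ a ∧ ¬ G.Adj a x) :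
    G.IsClique {t | G.Adj a t ∧ ∃ d ∈ D, G.Adj t d} := by
  rintro t₁ ⟨ht₁, d₁, hd₁, htd₁⟩ t₂ ⟨ht₂, d₂, hd₂, htd₂⟩ hne
  obtain ⟨p, hp⟩ := hD d₁ hd₁ d₂ hd₂
  refine hG.adj_of_walk_avoiding_closedNbhd ht₁ ht₂ hne (Walk.cons htd₁ (p.concat htd₂.symm))
    fun x hx => ?_
  simp only [Walk.support_cons, Walk.support_concat, List.mem_cons, List.mem_append,
    List.not_mem_nil, or_false] at hx
  rcases hx with rfl | hx | rfl
  exacts [.inl rfl, .inr (.inr (hp x hx)), .inr (.inl rfl)]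

lemma SimpleGraph.exists_not_adj_of_not_isClique {S K : Set V} (hK : G.IsClique K)
    (hS : ¬ G.IsClique S) :
    ∃ a ∈ S, ∃ b ∈ S, a ≠ b ∧ ¬ G.Adj a b ∧ ∀ k ∈ K, k ∈ S → k ≠ a → G.Adj a k := by
  by_cases h : ∃ k ∈ K, k ∈ S ∧ ∃ b ∈ S, k ≠ b ∧ ¬ G.Adj k b
  · obtain ⟨k, hkK, hkS, b, hbS, hkb, hnkb⟩ := h
    exact ⟨k, hkS, b, hbS, hkb, hnkb, fun k' hk'K _ hk' => hK hkK hk'K hk'.symm⟩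
  · push Not at h
    obtain ⟨a, haS, b, hbS, hab, hnab⟩ : ∃ a ∈ S, ∃ b ∈ S, a ≠ b ∧ ¬ G.Adj a b := by
      simpa [IsClique, Set.Pairwise] using hS
    exact ⟨a, haS, b, hbS, hab, hnab, fun k hkK hkS hka => (h k hkK hkS a haS hka).symm⟩

theorem IsChordal.exists_notMem_isClique_neighborSet_inter (hG : IsChordal G)
    (S : Finset V) {K : Set V} (hK : G.IsClique K) {y : V} (hyS : y ∈ S) (hyK : y ∉ K) :
    ∃ v ∈ S, v ∉ K ∧ G.IsClique (G.neighborSet v ∩ S) := by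
  classical
  induction S using Finset.strongInduction generalizing K y with
  | H S ih =>
  by_cases hS : G.IsClique (S : Set V)
  · exact ⟨y, hyS, hyK, hS.subset Set.inter_subset_right⟩
  obtain ⟨a, haS, b, hbS, hab, hnab, hKa⟩ := exists_not_adj_of_not_isClique hK hS
  set R : Set V := {x | x ∈ S ∧ x ≠ a ∧ ¬ G.Adj a x}
  set D : Set V := {z | ∃ p : G.Walk b z, ∀ x ∈ p.support, x ∈ R}
  set T : Set V := {t | G.Adj a t ∧ ∃ d ∈ D, G.Adj t d}
  have hDR : D ⊆ R := fun z ⟨p, hp⟩ => hp z p.end_mem_support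
  have hbD : b ∈ D := ⟨Walk.nil, by simpa [R] using ⟨hbS, hab.symm, hnab⟩⟩
  have hT : G.IsClique T := by
    refine hG.isClique_common_neighbors fun d₁ ⟨p₁, hp₁⟩ d₂ ⟨p₂, hp₂⟩ =>
      ⟨p₁.reverse.append p₂, fun x hx => ?_⟩
    rw [Walk.mem_support_append_iff, Walk.support_reverse, List.mem_reverse] at hx
    exact (hx.elim (hp₁ x) (hp₂ x)).2
  have hDnbr : ∀ v ∈ D, ∀ z ∈ S, G.Adj v z → z ∈ D ∨ z ∈ T := by
    rintro v ⟨p, hp⟩ z hzS hvz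
    by_cases hza : z = a
    · exact absurd (hza ▸ hvz.symm) (hp v p.end_mem_support).2.2
    by_cases haz : G.Adj a z
    · exact .inr ⟨haz, v, ⟨p, hp⟩, hvz.symm⟩
    · refine .inl ⟨p.concat hvz, fun x hx => ?_⟩
      rw [Walk.support_concat, List.mem_append, List.mem_singleton] at hx
      rcases hx with hx | rfl
      exacts [hp x hx, ⟨hzS, hza, haz⟩]
  set S' := S.filter (fun x => x ∈ D ∨ x ∈ T)
  have hS' : S' ⊂ S := Finset.filter_ssubset.2 ⟨a, haS, by
    rintro (ha | ha)
    exacts [(hDR ha).2.1 rfl, G.loopless.irrefl _ ha.1]⟩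
  obtain ⟨v, hvS', hvT, hv⟩ := ih S' hS' hT (Finset.mem_filter.2 ⟨hbS, .inl hbD⟩)
    (fun h => hnab h.1)
  obtain ⟨hvS, hvD⟩ : v ∈ S ∧ v ∈ D := by
    simpa [S', hvT] using hvS'
  refine ⟨v, hvS, fun hvK => (hDR hvD).2.2 (hKa v hvK hvS (hDR hvD).2.1), hv.subset ?_⟩
  rintro z ⟨hvz, hzS⟩
  exact ⟨hvz, Finset.mem_filter.2 ⟨hzS, hDnbr v hvD z hzS hvz⟩⟩

end Chordal

namespace Matrix

variable {n α : Type*}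

def IsSupportedOn [Zero α] (A : Matrix n n α) (s : Set n) : Prop :=
  ∀ i j, (i ∉ s ∨ j ∉ s) → A i j = 0

def HasSparsityPattern [Zero α] (A : Matrix n n α) (G : SimpleGraph n) : Prop :=
  ∀ i j, i ≠ j → ¬ G.Adj i j → A i j = 0

section Zero

variable [Zero α] {A : Matrix n n α} {s : Set n} {G : SimpleGraph n}

lemma IsSupportedOn.mono {t : Set n} (hA : A.IsSupportedOn s) (hst : s ⊆ t) :
    A.IsSupportedOn t := fun i j h => hA i j (h.imp (mt (@hst i)) (mt (@hst j)))

lemma IsSupportedOn.diff_singleton {v : n} (hA : A.IsSupportedOn s) (hrow : ∀ j, A v j = 0)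
    (hcol : ∀ i, A i v = 0) : A.IsSupportedOn (s \ {v}) := by
  rintro i j (hi | hj)
  · by_cases hiv : i = v
    · exact hiv ▸ hrow j
    · exact hA i j (.inl fun h => hi ⟨h, hiv⟩)
  · by_cases hjv : j = v
    · exact hjv ▸ hcol i
    · exact hA i j (.inr fun h => hj ⟨h, hjv⟩)

lemma IsSupportedOn.hasSparsityPattern (hA : A.IsSupportedOn s) (hs : G.IsClique s) :
    A.HasSparsityPattern G := fun i j hij hG => hA i j (by
  by_contra! h
  exact hG (hs h.1 h.2 hij))

end Zero

section AddGroup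

variable [AddGroup α] {A B : Matrix n n α} {s : Set n} {G : SimpleGraph n}

lemma IsSupportedOn.add (hA : A.IsSupportedOn s) (hB : B.IsSupportedOn s) :
    (A + B).IsSupportedOn s := fun i j h => by simp [hA i j h, hB i j h]

lemma IsSupportedOn.sub (hA : A.IsSupportedOn s) (hB : B.IsSupportedOn s) :
    (A - B).IsSupportedOn s := fun i j h => by simp [hA i j h, hB i j h]

lemma HasSparsityPattern.sub (hA : A.HasSparsityPattern G) (hB : B.HasSparsityPattern G) :
    (A - B).HasSparsityPattern G := fun i j hij hG => by simp [hA i j hij hG, hB i j hij hG]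

end AddGroup

lemma HasSparsityPattern.sum {ι : Type*} [AddCommGroup α] [Fintype ι] {A : ι → Matrix n n α}
    {G : SimpleGraph n} (hA : ∀ p, (A p).HasSparsityPattern G) :
    (∑ p, A p).HasSparsityPattern G := fun i j hij hG => by
  simp [Matrix.sum_apply, hA _ i j hij hG]

variable {𝕜 : Type*} [RCLike 𝕜]

/-- `B - B.pivotTerm v` is the Schur complement of the pivot `B v v`. When `B v v = 0` the term is
`0` (as `0⁻¹ = 0`), which is right for positive semidefinite `B`, whose row `v` then vanishes. -/
def pivotTerm (B : Matrix n n 𝕜) (v : n) : Matrix n n 𝕜 :=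
  (B v v)⁻¹ • vecMulVec (star (B v)) (B v)

lemma pivotTerm_apply (B : Matrix n n 𝕜) (v i j : n) :
    B.pivotTerm v i j = (B v v)⁻¹ * (star (B v i) * B v j) := by
  simp [pivotTerm, vecMulVec_apply]

lemma pivotTerm_isSupportedOn (B : Matrix n n 𝕜) (v : n) :
    (B.pivotTerm v).IsSupportedOn {i | B v i ≠ 0} := by
  rintro i j (hi | hj) <;> simp_all [pivotTerm_apply]

variable [Fintype n]

lemma PosSemidef.pivotTerm {B : Matrix n n 𝕜} (hB : B.PosSemidef) (v : n) :
    (B.pivotTerm v).PosSemidef :=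
  (posSemidef_vecMulVec_star_self _).smul (inv_nonneg.2 hB.diag_nonneg)

variable [DecidableEq n]

lemma IsHermitian.conjTranspose_mul_mul_eq_sub_pivotTerm {B : Matrix n n 𝕜} (hB : B.IsHermitian)
    (v : n) :
    (1 - (B v v)⁻¹ • vecMulVec (Pi.single v 1) (B v))ᴴ * B *
        (1 - (B v v)⁻¹ • vecMulVec (Pi.single v 1) (B v)) = B - B.pivotTerm v := by
  have hcol : B *ᵥ Pi.single v 1 = star (B v) := by
    ext i
    simp [← hB.apply v i]
  have hvv : star (B v v)⁻¹ = (B v v)⁻¹ := by rw [star_inv₀, hB.apply]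
  have hinv : (B v v)⁻¹ * (B v v)⁻¹ * B v v = (B v v)⁻¹ := by
    rcases eq_or_ne (B v v) 0 with h | h
    · simp [h]
    · field_simp
  simp only [pivotTerm, conjTranspose_sub, conjTranspose_one, conjTranspose_smul,
    conjTranspose_vecMulVec, hvv, sub_mul, mul_sub, one_mul, mul_one, smul_mul, Matrix.mul_smul,
    vecMulVec_mul, mul_vecMulVec, single_one_vecMul, hcol, Pi.star_single, star_one, row_apply',
    smul_mulVec, vecMulVec_mulVec, dotProduct_single_one, op_smul_eq_smul, smul_smul]
  rw [smul_vecMulVec, smul_smul, ← mul_assoc, hinv]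
  abel

lemma PosSemidef.sub_pivotTerm {B : Matrix n n 𝕜} (hB : B.PosSemidef) (v : n) :
    (B - B.pivotTerm v).PosSemidef := by
  rw [← hB.isHermitian.conjTranspose_mul_mul_eq_sub_pivotTerm]
  exact hB.conjTranspose_mul_mul_same _

lemma PosSemidef.row_eq_zero_of_diag_eq_zero {B : Matrix n n 𝕜} (hB : B.PosSemidef) {v : n}
    (h : B v v = 0) : B v = 0 := by
  have hcol := (hB.dotProduct_mulVec_zero_iff (Pi.single v 1)).1 (by simp [h])
  ext j
  simpa [← hB.isHermitian.apply v j] using congrFun hcol j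

lemma PosSemidef.sub_pivotTerm_row_eq_zero {B : Matrix n n 𝕜} (hB : B.PosSemidef) (v j : n) :
    (B - B.pivotTerm v) v j = 0 := by
  rcases eq_or_ne (B v v) 0 with h | h
  · simp [pivotTerm_apply, hB.row_eq_zero_of_diag_eq_zero h]
  · rw [sub_apply, pivotTerm_apply, hB.isHermitian.apply v v]
    field_simp
    ring

end Matrix

lemma SimpleGraph.IsClique.exists_subset_of_maximal {V ι : Type*} [Finite V] {G : SimpleGraph V}
    {C : ι → Set V} (hC : ∀ s, Maximal G.IsClique s → ∃ p, s = C p) {K : Set V}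
    (hK : G.IsClique K) : ∃ p, K ⊆ C p := by
  obtain ⟨s, hKs, hs⟩ := Finite.exists_le_maximal hK
  obtain ⟨p, rfl⟩ := hC s hs
  exact ⟨p, hKs⟩

theorem IsChordal.exists_posSemidef_decomposition {n 𝕜 ι : Type*} [Fintype n] [DecidableEq n]
    [RCLike 𝕜] [Fintype ι] [DecidableEq ι] {G : SimpleGraph n} (hG : IsChordal G)
    (C : ι → Set n) (hC : ∀ K, G.IsClique K → ∃ p, K ⊆ C p) (S : Finset n)
    {B : Matrix n n 𝕜} (hB : B.PosSemidef) (hBS : B.IsSupportedOn S)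
    (hBG : B.HasSparsityPattern G) :
    ∃ W : ι → Matrix n n 𝕜, (∀ p, (W p).PosSemidef) ∧ (∀ p, (W p).IsSupportedOn (C p)) ∧
      B = ∑ p, W p := by
  induction S using Finset.strongInduction generalizing B with
  | H S ih =>
  rcases S.eq_empty_or_nonempty with rfl | ⟨y, hyS⟩
  · refine ⟨0, fun _ => .zero, fun _ _ _ _ => rfl, ?_⟩
    ext i j
    simpa using hBS i j (.inl (Finset.notMem_empty i))
  obtain ⟨v, hvS, -, hv⟩ := hG.exists_notMem_isClique_neighborSet_inter S isClique_empty hyS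
    (Set.notMem_empty y)
  set K := insert v (G.neighborSet v ∩ S)
  have hK : G.IsClique K := hv.insert fun _ hb _ => hb.1
  obtain ⟨p₀, hp₀⟩ := hC K hK
  have hrow : {i | B v i ≠ 0} ⊆ K ∩ S := fun i hi => by
    have hiS : i ∈ S := by_contra fun h => hi (hBS v i (.inr h))
    by_cases hiv : v = i
    · exact ⟨.inl hiv.symm, hiS⟩
    · exact ⟨.inr ⟨by_contra fun h => hi (hBG v i hiv h), hiS⟩, hiS⟩
  set Y := B.pivotTerm v
  have hY : Y.IsSupportedOn (K ∩ S) := (B.pivotTerm_isSupportedOn v).mono hrow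
  have hR : (B - Y).IsSupportedOn ↑(S.erase v) := by
    rw [Finset.coe_erase]
    refine (hBS.sub (hY.mono Set.inter_subset_right)).diff_singleton
      (hB.sub_pivotTerm_row_eq_zero v) fun i => ?_
    rw [← (hB.sub_pivotTerm v).isHermitian.apply, hB.sub_pivotTerm_row_eq_zero, star_zero]
  obtain ⟨W, hW, hWC, hBW⟩ := ih (S.erase v) (S.erase_ssubset hvS) (hB.sub_pivotTerm v) hR
    (hBG.sub (hY.hasSparsityPattern (hK.subset Set.inter_subset_left)))
  refine ⟨fun p => W p + (Pi.single p₀ Y : ι → Matrix n n 𝕜) p, fun p => ?_, fun p => ?_, ?_⟩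
  · rcases eq_or_ne p p₀ with rfl | hp
    · simpa using (hW p).add (hB.pivotTerm v)
    · simpa [hp] using hW p
  · rcases eq_or_ne p p₀ with rfl | hp
    · simpa using (hWC p).add (hY.mono (Set.inter_subset_left.trans hp₀))
    · simpa [hp] using hWC p
  · rw [Finset.sum_add_distrib, Finset.sum_pi_single', if_pos (Finset.mem_univ _), ← hBW,
      sub_add_cancel]

theorem chordal_block_decomposition_general
    {N M : ℕ} (G : SimpleGraph (Fin N))
    (hchordal : IsChordal G)
    (C : Fin M → Set (Fin N))
    (hC : ∀ p, Maximal G.IsClique (C p))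
    (hCall : ∀ s : Set (Fin N), Maximal G.IsClique s → ∃ p, s = C p)
    (Z : Matrix (Fin N) (Fin N) ℝ) :
    ((-Z).PosSemidef ∧ ∀ i j, i ≠ j → ¬ G.Adj i j → Z i j = 0) ↔
      ∃ W : Fin M → Matrix (Fin N) (Fin N) ℝ,
        (∀ p, (-(W p)).PosSemidef) ∧
        (∀ p i j, (i ∉ C p ∨ j ∉ C p) → W p i j = 0) ∧
        Z = ∑ p, W p := by
  constructor
  · rintro ⟨hZ, hZG⟩
    obtain ⟨W, hW, hWC, hZW⟩ := hchordal.exists_posSemidef_decomposition C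
      (fun _ hK => hK.exists_subset_of_maximal hCall) Finset.univ hZ
      (fun i j h => by simp at h) fun i j hij h => by simp [hZG i j hij h]
    refine ⟨fun p => -W p, fun p => by simpa using hW p, fun p i j h => by simp [hWC p i j h], ?_⟩
    rw [Finset.sum_neg_distrib, ← hZW, neg_neg]
  · rintro ⟨W, hW, hWC, rfl⟩
    refine ⟨?_, Matrix.HasSparsityPattern.sum fun p =>
      Matrix.IsSupportedOn.hasSparsityPattern (hWC p) (hC p).1⟩
    rw [← Finset.sum_neg_distrib]
    exact Matrix.posSemidef_sum _ fun p _ => hW p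

/-- Chordal decomposition, Theorem 1: a symmetric matrix with the
sparsity pattern of a chordal graph `G` is negative semidefinite iff it is a sum
of negative semidefinite matrices each supported on a maximal clique
(`E_{C_p}ᵀ Z_p E_{C_p}`). -/
theorem chordal_block_decomposition
    {N M : ℕ} (G : SimpleGraph (Fin N))
    (hchordal : IsChordal G)
    (C : Fin M → Set (Fin N))
    (hC : ∀ p, Maximal G.IsClique (C p))
    (hCall : ∀ s : Set (Fin N), Maximal G.IsClique s → ∃ p, s = C p)
    (Z : Matrix (Fin N) (Fin N) ℝ) (hZs : Z.IsSymm) :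
    ((-Z).PosSemidef ∧ ∀ i j, i ≠ j → ¬ G.Adj i j → Z i j = 0) ↔
      ∃ W : Fin M → Matrix (Fin N) (Fin N) ℝ,
        (∀ p, (-(W p)).PosSemidef) ∧
        (∀ p i j, (i ∉ C p ∨ j ∉ C p) → W p i j = 0) ∧
        Z = ∑ p, W p :=
  chordal_block_decomposition_general G hchordal C hC hCall Z
end

section
/- Contrapositive corollary of the No-Overlap theorem: if i, j lie in maximal clique C_p and k, l lie in maximal clique C_q of Q̄ with p ≠ q, and neither (i,j) nor (k,l) is an edge of the overlap graph Q̄_o, then (V_i(H) ∩ V_j(H)) ∩ (V_k(H) ∩ V_l(H)) = ∅; consequently the blocks (Q̄)_{ij} and (Q̄)_{kl} of Q̄(X) = Q + SH + HᵀSᵀ + HᵀRH involve disjoint sets of R-parameters. -/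
/-- The in-neighborhood `V_i(H) = {k : (k,i) ∈ E(H)}` of a directed graph. -/
def inNbr {N : ℕ} (E : Fin N → Fin N → Prop) (i : Fin N) : Set (Fin N) :=
  {k | E k i}

/-- The (undirected, loopless) structure graph `Q̄` induced by the directed
interconnection structure `E(H)`:
`E(Q̄) = E(H) ∪ E(H)ᵀ ∪ {(i,j) : V_i(H) ∩ V_j(H) ≠ ∅}`. -/
def QbarGraph {N : ℕ} (E : Fin N → Fin N → Prop) : SimpleGraph (Fin N) where
  Adj i j := i ≠ j ∧ (E i j ∨ E j i ∨ (inNbr E i ∩ inNbr E j).Nonempty)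
  symm := ⟨by
    rintro i j ⟨hne, h | h | ⟨k, h1, h2⟩⟩
    · exact ⟨hne.symm, Or.inr (Or.inl h)⟩
    · exact ⟨hne.symm, Or.inl h⟩
    · exact ⟨hne.symm, Or.inr (Or.inr ⟨k, h2, h1⟩)⟩⟩
  loopless := ⟨fun i ⟨h, _⟩ => h rfl⟩

/-- `(i,j)` is an edge of the overlap graph `Q̄_o = ⋃_{p ≠ q} (𝒞_p ∩ 𝒞_q)`,
the union over pairs of distinct maximal cliques of the intersections of their
associated complete graphs. -/
def OverlapEdge {N : ℕ} (G : SimpleGraph (Fin N)) (i j : Fin N) : Prop :=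
  i ≠ j ∧ ∃ A B : Set (Fin N), Maximal G.IsClique A ∧ Maximal G.IsClique B ∧
    A ≠ B ∧ i ∈ A ∧ j ∈ A ∧ i ∈ B ∧ j ∈ B

/-! A common in-neighbour `m` of `i, j, k, l` makes `{i, j, k, l}` a clique of `Q̄`, which
extends to a maximal clique `D`. A pair of vertices that is not an edge of `Q̄_o` lies in only
one maximal clique, so `C_p = D = C_q`. -/

lemma eq_of_not_overlapEdge {N : ℕ} {G : SimpleGraph (Fin N)} {A B : Set (Fin N)}
    {i j : Fin N} (hA : Maximal G.IsClique A) (hB : Maximal G.IsClique B) (hij : i ≠ j)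
    (hiA : i ∈ A) (hjA : j ∈ A) (hiB : i ∈ B) (hjB : j ∈ B) (h : ¬ OverlapEdge G i j) :
    A = B :=
  not_not.mp fun hAB => h ⟨hij, A, B, hA, hB, hAB, hiA, hjA, hiB, hjB⟩

lemma isClique_qbarGraph_of_forall_mem_inNbr {N : ℕ} {E : Fin N → Fin N → Prop}
    {S : Set (Fin N)} {m : Fin N} (hm : ∀ x ∈ S, m ∈ inNbr E x) : (QbarGraph E).IsClique S :=
  fun x hx y hy hxy => ⟨hxy, Or.inr (Or.inr ⟨m, hm x hx, hm y hy⟩)⟩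

/-- contrapositive of the No-Overlap theorem: if `i, j ∈ C_p` and
`k, l ∈ C_q` for distinct maximal cliques of `Q̄`, and neither `(i,j)` nor `(k,l)`
is an edge of the overlap graph `Q̄_o`, then
`(V_i(H) ∩ V_j(H)) ∩ (V_k(H) ∩ V_l(H)) = ∅`, so the blocks `(Q̄)_{ij}` and
`(Q̄)_{kl}` involve disjoint sets of `R`-parameters. -/
theorem no_overlap_disjoint_R_parameters
    {N : ℕ} (E : Fin N → Fin N → Prop)
    (Cp Cq : Set (Fin N))
    (hCp : Maximal (QbarGraph E).IsClique Cp)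
    (hCq : Maximal (QbarGraph E).IsClique Cq)
    (hpq : Cp ≠ Cq)
    (i j k l : Fin N)
    (hi : i ∈ Cp) (hj : j ∈ Cp) (hk : k ∈ Cq) (hl : l ∈ Cq)
    (hij : i ≠ j) (hkl : k ≠ l)
    (hij' : ¬ OverlapEdge (QbarGraph E) i j)
    (hkl' : ¬ OverlapEdge (QbarGraph E) k l) :
    (inNbr E i ∩ inNbr E j) ∩ (inNbr E k ∩ inNbr E l) = ∅ := by
  by_contra hne
  obtain ⟨m, ⟨hmi, hmj⟩, hmk, hml⟩ := Set.nonempty_iff_ne_empty.2 hne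
  have hS : (QbarGraph E).IsClique {i, j, k, l} :=
    isClique_qbarGraph_of_forall_mem_inNbr (m := m) <| by
      rintro x (rfl | rfl | rfl | rfl) <;> assumption
  obtain ⟨D, hSD, hD⟩ := Finite.exists_le_maximal hS
  simp only [Set.insert_subset_iff, Set.singleton_subset_iff] at hSD
  obtain ⟨hiD, hjD, hkD, hlD⟩ := hSD
  exact hpq <| (eq_of_not_overlapEdge hCp hD hij hi hj hiD hjD hij').trans
    (eq_of_not_overlapEdge hCq hD hkl hk hl hkD hlD hkl').symm
end

section
/- Consequence of block structure: (Q̄)_{ij} = 0 for all X (i.e., for all choices of Q_i, S_i, R_i) whenever i ≠ j, (i,j) ∉ E(H), (j,i) ∉ E(H), and V_i(H) ∩ V_j(H) = ∅, where V_i(H) = {k : (k,i) ∈ E(H)}. Hence the structure graph Q̄ of Q̄(X) satisfies E(Q̄) ⊆ E(H) ∪ E(H)ᵀ ∪ {(i,j) : V_i(H) ∩ V_j(H) ≠ ∅}. -/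
/-! Block diagonal factors only couple a block of a product to the blocks of the other factors
in the same block row or column: the `(i, j)` block of `S H` sees only `H_{ij}`, that of
`Hᵀ Sᵀ = (S H)ᵀ` only `H_{ji}`, and that of `Hᵀ R H` only the products `H_{ki}ᵀ R_k H_{kj}`. -/

open Matrix

/-- Block diagonality of a block matrix with block sizes `d i`. -/
def BlockDiagonal' {N : ℕ} {d : Fin N → ℕ}
    (M : Matrix ((i : Fin N) × Fin (d i)) ((i : Fin N) × Fin (d i)) ℝ) : Prop :=
  ∀ x y : (i : Fin N) × Fin (d i), x.1 ≠ y.1 → M x y = 0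

namespace BlockDiagonal'

variable {N : ℕ} {d : Fin N → ℕ}
  {A B M R : Matrix ((i : Fin N) × Fin (d i)) ((i : Fin N) × Fin (d i)) ℝ}

theorem mul_apply_eq_zero (hR : BlockDiagonal' R) {x y : (i : Fin N) × Fin (d i)}
    (hM : ∀ c, M ⟨x.1, c⟩ y = 0) : (R * M) x y = 0 := by
  rw [mul_apply]
  refine Finset.sum_eq_zero fun ⟨k, c⟩ _ => ?_
  by_cases hk : x.1 = k
  · subst hk
    rw [hM, mul_zero]
  · rw [hR _ _ hk, zero_mul]

theorem mul_mul_apply_eq_zero (hR : BlockDiagonal' R) {x y : (i : Fin N) × Fin (d i)}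
    (hAB : ∀ k, (∀ c, A x ⟨k, c⟩ = 0) ∨ (∀ c, B ⟨k, c⟩ y = 0)) : (A * R * B) x y = 0 := by
  rw [mul_apply]
  refine Finset.sum_eq_zero fun ⟨l, c'⟩ _ => ?_
  rw [mul_apply, Finset.sum_mul]
  refine Finset.sum_eq_zero fun ⟨k, c⟩ _ => ?_
  by_cases hkl : k = l
  · subst hkl
    rcases hAB k with hA | hB
    · rw [hA, zero_mul, zero_mul]
    · rw [hB, mul_zero]
  · rw [hR _ _ hkl, mul_zero, zero_mul]

end BlockDiagonal'

/-- for every choice of block diagonal `Q, S, R` (i.e. for all `X`),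
the block `(Q̄)_{ij}` of `Q̄ = Q + SH + HᵀSᵀ + HᵀRH` vanishes whenever `i ≠ j`,
`(i,j) ∉ E(H)`, `(j,i) ∉ E(H)` and `V_i(H) ∩ V_j(H) = ∅` with
`V_i(H) = {k : (k,i) ∈ E(H)}`; hence the structure graph of `Q̄` satisfies
`E(Q̄) ⊆ E(H) ∪ E(H)ᵀ ∪ {(i,j) : V_i(H) ∩ V_j(H) ≠ ∅}`. -/
theorem Qbar_structure_subset
    {N : ℕ} {d : Fin N → ℕ}
    (E : Fin N → Fin N → Prop)
    (H : Matrix ((i : Fin N) × Fin (d i)) ((i : Fin N) × Fin (d i)) ℝ)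
    (hHstruct : ∀ i j : Fin N, ¬ E i j →
      ∀ (a : Fin (d i)) (b : Fin (d j)), H ⟨i, a⟩ ⟨j, b⟩ = 0)
    (i j : Fin N) (hij : i ≠ j)
    (hEij : ¬ E i j) (hEji : ¬ E j i)
    (hV : ¬ ∃ k : Fin N, E k i ∧ E k j) :
    ∀ Q S R : Matrix ((i : Fin N) × Fin (d i)) ((i : Fin N) × Fin (d i)) ℝ,
      BlockDiagonal' Q → BlockDiagonal' S → BlockDiagonal' R →
      ∀ (a : Fin (d i)) (b : Fin (d j)),
        (Q + S * H + Hᵀ * Sᵀ + Hᵀ * R * H) ⟨i, a⟩ ⟨j, b⟩ = 0 := by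
  intro Q S R hQ hS hR a b
  have hSH : (S * H) ⟨i, a⟩ ⟨j, b⟩ = 0 :=
    hS.mul_apply_eq_zero fun c => hHstruct i j hEij c b
  have hHS : (Hᵀ * Sᵀ) ⟨i, a⟩ ⟨j, b⟩ = 0 := by
    rw [← transpose_mul, transpose_apply]
    exact hS.mul_apply_eq_zero fun c => hHstruct j i hEji c a
  have hHRH : (Hᵀ * R * H) ⟨i, a⟩ ⟨j, b⟩ = 0 := by
    refine hR.mul_mul_apply_eq_zero fun k => ?_
    by_cases hki : E k i
    · exact .inr fun c => hHstruct k j (fun hkj => hV ⟨k, hki, hkj⟩) c b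
    · exact .inl fun c => hHstruct k i hki c a
  simp only [Matrix.add_apply, hQ ⟨i, a⟩ ⟨j, b⟩ hij, hSH, hHS, hHRH, add_zero]
end
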